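/- arXiv:1208.4383 — 2 statements merged into one kernel-verified Lean document; each statement's English description precedes it below -/
import Mathlib

section
/- Let T be an infinite semigroup that is an annihilator extension of an infinite semigroup S of coclass r-1 (r ≥ 1). Then T is finitely generated, residually nilpotent, and has coclass r. -/
/-- `sgPow S i` is the set `Sⁱ` of all products of `i` elements of `S`
(with the convention `S⁰ = S¹ = S`). -/
def sgPow (S : Type*) [Mul S] : ℕ → Set S
  | 0 => Set.univ
  | 1 => Set.univ
  | n + 2 => Set.image2 (· * ·) (sgPow S (n + 1)) Set.univ

/-- A semigroup with zero is nilpotent of class `c` if `S^(c+1) = {0}` and `S^c ≠ {0}`. -/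
def IsNilpotentOfClass (S : Type*) [SemigroupWithZero S] (c : ℕ) : Prop :=
  sgPow S (c + 1) = {0} ∧ sgPow S c ≠ {0}

/-- `mpow x i` is the power `xⁱ` in a magma, for `i ≥ 1` (with `mpow x 0 = x` by convention). -/
def mpow {S : Type*} [Mul S] (x : S) : ℕ → S
  | 0 => x
  | 1 => x
  | n + 2 => mpow x (n + 1) * x
/-- A semigroup is finitely generated if it is generated by a finite set. -/
def FGSemigroup (S : Type*) [Mul S] : Prop :=
  ∃ F : Finset S, Subsemigroup.closure (F : Set S) = ⊤

/-- A semigroup with zero is residually nilpotent if the intersection of its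
power ideals is `{0}`. -/
def ResiduallyNilpotent (S : Type*) [SemigroupWithZero S] : Prop :=
  ⋂ i, sgPow S (i + 1) = {0}

/-- The coclass of the nilpotent quotient `S/Sⁱ`: its number of non-zero elements,
`|S \ Sⁱ|`, minus its class `i - 1`. -/
noncomputable def ccQuot (S : Type*) [SemigroupWithZero S] (i : ℕ) : ℕ :=
  (Set.univ \ sgPow S i).ncard - (i - 1)

/-- A finitely generated residually nilpotent semigroup has coclass `r` if the coclasses
of its nilpotent quotients `S/Sⁱ` converge to `r`. -/
def HasCoclassSg (S : Type*) [SemigroupWithZero S] (r : ℕ) : Prop :=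
  ∀ᶠ i in Filter.atTop, ccQuot S i = r

/-!
Finite generation makes every complement `S \ Sⁱ` finite, so in the infinite residually
nilpotent semigroup `S` the chain `S ⊋ S² ⊋ ⋯` is strict and `|S \ Sⁱ| ≥ i - 1`; coclass `r - 1`
then says that from some level on every layer `Sᵏ \ Sᵏ⁺¹` is a single element. Away from `0`
and `t` the quotient map `ν : T → S` is a bijection respecting the powers, so `T` inherits finite
generation, `⋂ Tⁱ ⊆ {0, t}`, and the layers of `T` are singletons up to `t`. Once `t ∉ Tⁱ`, the
complement `T \ Tⁱ` has exactly one element more than `S \ Sⁱ`, which gives residual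
nilpotency and coclass `r`.

The crux is that `t` leaves the powers of `T`. Otherwise every layer of `T` past some level `N`
is a singleton, a layer element at level `b` is a right multiple of the one at level `a < b`,
and factoring `t ∈ Tⁱ` shows `t = u w` for the fixed `u` of level `N` and `w` of arbitrarily
high level. Two such `w` give `t = u w = u w Z = t Z = 0`.
-/

open Filter

section Powers

variable {M : Type*}

theorem sgPow_succ [Mul M] {n : ℕ} (hn : n ≠ 0) :
    sgPow M (n + 1) = Set.image2 (· * ·) (sgPow M n) Set.univ := by
  obtain ⟨m, rfl⟩ := Nat.exists_eq_succ_of_ne_zero hn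
  rfl

theorem mul_mem_sgPow_succ [Mul M] {n : ℕ} {x : M} (hx : x ∈ sgPow M n) (y : M) :
    x * y ∈ sgPow M (n + 1) := by
  rcases n with _ | n
  · trivial
  · exact Set.mem_image2_of_mem hx (Set.mem_univ y)

theorem sgPow_succ_subset [Mul M] : ∀ n : ℕ, sgPow M (n + 1) ⊆ sgPow M n
  | 0 => Set.subset_univ _
  | 1 => Set.subset_univ _
  | n + 2 => Set.image2_subset_right (sgPow_succ_subset (n + 1))

theorem sgPow_antitone [Mul M] : Antitone (sgPow M) :=
  antitone_nat_of_succ_le sgPow_succ_subset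

theorem zero_mem_sgPow [MulZeroClass M] : ∀ n : ℕ, (0 : M) ∈ sgPow M n
  | 0 => trivial
  | n + 1 => by simpa using mul_mem_sgPow_succ (zero_mem_sgPow n) (0 : M)

theorem mul_mem_sgPow_add [Semigroup M] {m n : ℕ} {x y : M} (hx : x ∈ sgPow M m)
    (hy : y ∈ sgPow M n) : x * y ∈ sgPow M (m + n) := by
  induction n generalizing y with
  | zero => exact sgPow_succ_subset m (mul_mem_sgPow_succ hx y)
  | succ n ih =>
    rcases eq_or_ne n 0 with rfl | hn
    · exact mul_mem_sgPow_succ hx y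
    · rw [sgPow_succ hn] at hy
      obtain ⟨y, hy, z, -, rfl⟩ := hy
      rw [← mul_assoc, ← add_assoc]
      exact mul_mem_sgPow_succ (ih hy) z

theorem exists_mul_of_mem_sgPow_add [Semigroup M] {m n : ℕ} (hm : m ≠ 0) (hn : n ≠ 0) {x : M}
    (hx : x ∈ sgPow M (m + n)) : ∃ a ∈ sgPow M m, ∃ b ∈ sgPow M n, a * b = x := by
  induction n generalizing x with
  | zero => exact absurd rfl hn
  | succ n ih =>
    rcases eq_or_ne n 0 with rfl | hn'
    · rw [sgPow_succ hm] at hx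
      obtain ⟨a, ha, b, -, rfl⟩ := hx
      exact ⟨a, ha, b, trivial, rfl⟩
    · rw [← add_assoc, sgPow_succ (by omega)] at hx
      obtain ⟨y, hy, z, -, rfl⟩ := hx
      obtain ⟨a, ha, b, hb, rfl⟩ := ih hn' hy
      exact ⟨a, ha, b * z, mul_mem_sgPow_succ hb z, (mul_assoc a b z).symm⟩

theorem exists_mem_sgPow_sdiff_of_notMem_iInter [Mul M] {x : M} {j : ℕ}
    (hx : x ∈ sgPow M j) (hx' : x ∉ ⋂ i, sgPow M (i + 1)) :
    ∃ k, j ≤ k ∧ x ∈ sgPow M k \ sgPow M (k + 1) := by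
  by_contra! h
  have hmem : ∀ k, j ≤ k → x ∈ sgPow M k := fun k hk => by
    induction k, hk using Nat.le_induction with
    | base => exact hx
    | succ k hk ih => by_contra hk1; exact h k hk ⟨ih, hk1⟩
  exact hx' (Set.mem_iInter.mpr fun i =>
    sgPow_antitone (le_max_right j (i + 1)) (hmem _ (le_max_left j (i + 1))))

end Powers

section Generators

variable {M : Type*}

/-- Products of `n + 1` elements of `F`. -/
def genPow [Mul M] (F : Set M) : ℕ → Set M
  | 0 => F
  | n + 1 => Set.image2 (· * ·) (genPow F n) F

theorem genPow_finite [Mul M] {F : Set M} (hF : F.Finite) : ∀ n, (genPow F n).Finite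
  | 0 => hF
  | n + 1 => (genPow_finite hF n).image2 _ hF

theorem genPow_subset_sgPow [Mul M] (F : Set M) : ∀ n, genPow F n ⊆ sgPow M (n + 1)
  | 0 => Set.subset_univ _
  | n + 1 => Set.image2_subset_iff.mpr fun _ hx y _ =>
      mul_mem_sgPow_succ (genPow_subset_sgPow F n hx) y

theorem mul_mem_genPow [Semigroup M] {F : Set M} {m n : ℕ} {x y : M} (hx : x ∈ genPow F m)
    (hy : y ∈ genPow F n) : x * y ∈ genPow F (m + n + 1) := by
  induction n generalizing y with
  | zero => exact Set.mem_image2_of_mem hx hy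
  | succ n ih =>
    obtain ⟨y, hy, z, hz, rfl⟩ := hy
    rw [← mul_assoc]
    exact Set.mem_image2_of_mem (ih hy) hz

theorem exists_mem_genPow_of_mem_closure [Semigroup M] {F : Set M} {x : M}
    (hx : x ∈ Subsemigroup.closure F) : ∃ n, x ∈ genPow F n := by
  induction hx using Subsemigroup.closure_induction with
  | mem x hx => exact ⟨0, hx⟩
  | mul x y _ _ hx hy =>
    obtain ⟨m, hm⟩ := hx
    obtain ⟨n, hn⟩ := hy
    exact ⟨m + n + 1, mul_mem_genPow hm hn⟩

theorem FGSemigroup.finite_compl_sgPow [Semigroup M] (hfg : FGSemigroup M) (i : ℕ) :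
    (sgPow M i)ᶜ.Finite := by
  obtain ⟨F, hF⟩ := hfg
  refine ((Set.finite_lt_nat i).biUnion fun n _ => genPow_finite F.finite_toSet n).subset
    fun x hx => ?_
  obtain ⟨n, hn⟩ := exists_mem_genPow_of_mem_closure (F := (F : Set M)) (x := x)
    (by rw [hF]; exact Subsemigroup.mem_top x)
  refine Set.mem_biUnion (x := n) (Nat.lt_of_not_le fun hin => hx ?_) hn
  exact sgPow_antitone (by omega) (genPow_subset_sgPow _ n hn)

end Generators

section Coclass

variable {S : Type*} [SemigroupWithZero S] [Infinite S]

theorem sgPow_succ_ne (hfg : FGSemigroup S) (hrn : ResiduallyNilpotent S) {i : ℕ} (hi : i ≠ 0) :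
    sgPow S (i + 1) ≠ sgPow S i := by
  intro h
  have hstable : ∀ j, i ≤ j → sgPow S j = sgPow S i := fun j hj => by
    induction j, hj using Nat.le_induction with
    | base => rfl
    | succ j hj ih => rw [sgPow_succ (by omega), ih, ← sgPow_succ hi, h]
  have hzero : sgPow S i ⊆ {0} := fun x hx => by
    rw [← hrn]
    exact Set.mem_iInter.mpr fun k => (le_total i (k + 1)).elim
      (fun hk => hstable _ hk ▸ hx) fun hk => sgPow_antitone hk hx
  refine Set.infinite_univ (α := S) (((hfg.finite_compl_sgPow i).union
    (Set.finite_singleton 0)).subset fun x _ => ?_)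
  by_cases hx : x ∈ sgPow S i
  · exact Or.inr (hzero hx)
  · exact Or.inl hx

theorem ncard_compl_sgPow_lt (hfg : FGSemigroup S) (hrn : ResiduallyNilpotent S) {i : ℕ}
    (hi : i ≠ 0) : (sgPow S i)ᶜ.ncard < (sgPow S (i + 1))ᶜ.ncard :=
  Set.ncard_lt_ncard (compl_lt_compl_iff_lt.mpr
    ((sgPow_succ_subset i).ssubset_of_ne (sgPow_succ_ne hfg hrn hi)))
    (hfg.finite_compl_sgPow _)

theorem sub_one_le_ncard_compl_sgPow (hfg : FGSemigroup S) (hrn : ResiduallyNilpotent S)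
    (i : ℕ) : i - 1 ≤ (sgPow S i)ᶜ.ncard := by
  induction i with
  | zero => exact Nat.zero_le _
  | succ i ih =>
    rcases eq_or_ne i 0 with rfl | hi
    · exact Nat.zero_le _
    · have := ncard_compl_sgPow_lt hfg hrn hi
      omega

-- `ccQuot` truncates, so the lower bound above is what turns it into an honest count.
theorem HasCoclassSg.eventually_ncard_compl_sgPow (hfg : FGSemigroup S)
    (hrn : ResiduallyNilpotent S) {c : ℕ} (hc : HasCoclassSg S c) :
    ∀ᶠ i in atTop, (sgPow S i)ᶜ.ncard = i - 1 + c :=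
  hc.mono fun i hi => by
    have := sub_one_le_ncard_compl_sgPow hfg hrn i
    rw [ccQuot, ← Set.compl_eq_univ_sdiff] at hi
    omega

theorem HasCoclassSg.eventually_ncard_sgPow_sdiff (hfg : FGSemigroup S)
    (hrn : ResiduallyNilpotent S) {c : ℕ} (hc : HasCoclassSg S c) :
    ∀ᶠ k in atTop, (sgPow S k \ sgPow S (k + 1)).ncard = 1 := by
  have hcard := hc.eventually_ncard_compl_sgPow hfg hrn
  filter_upwards [hcard, (tendsto_add_atTop_nat 1).eventually hcard, eventually_ge_atTop 1]
    with k hk hk1 hk0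
  rw [← compl_sdiff_compl, Set.ncard_sdiff (Set.compl_subset_compl.mpr (sgPow_succ_subset k))
    (hfg.finite_compl_sgPow k), hk, hk1]
  omega

end Coclass

section Annihilator

variable {T : Type*} [SemigroupWithZero T] {t : T} (htl : ∀ x, t * x = 0)
  (hres : ∀ x ∈ ⋂ i, sgPow T (i + 1), x = 0 ∨ x = t)
include htl hres

theorem exists_eq_mul_of_mem_sgPow_sdiff {N : ℕ}
    (hsub : ∀ k, N ≤ k → (sgPow T k \ sgPow T (k + 1)).Subsingleton) {a b : ℕ} {u v : T}
    (ha : N ≤ a) (ha0 : a ≠ 0) (hab : a < b) (hu : u ∈ sgPow T a \ sgPow T (a + 1))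
    (hv : v ∈ sgPow T b \ sgPow T (b + 1)) : ∃ Z ∈ sgPow T (b - a), v = u * Z := by
  obtain ⟨hvb, hvb1⟩ := hv
  rw [show b = a + (b - a) by omega] at hvb
  obtain ⟨y, hy, Z, hZ, rfl⟩ := exists_mul_of_mem_sgPow_add ha0 (by omega) hvb
  refine ⟨Z, hZ, ?_⟩
  have hy0 : y ≠ 0 := by rintro rfl; exact hvb1 (by simpa using zero_mem_sgPow (b + 1))
  have hyt : y ≠ t := by rintro rfl; exact hvb1 (by simpa [htl] using zero_mem_sgPow (b + 1))
  obtain ⟨k, hk, hyk⟩ := exists_mem_sgPow_sdiff_of_notMem_iInter hy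
    fun hy' => (hres y hy').elim hy0 hyt
  have hka : k = a := by
    refine le_antisymm (Nat.le_of_not_lt fun hak => hvb1 ?_) hk
    exact sgPow_antitone (by omega) (mul_mem_sgPow_add hyk.1 hZ)
  rw [hka] at hyk
  rw [hsub a ha hyk hu]

-- Write `t ∈ Tᴺ⁺¹ Tᵐ⁺¹`: the left factor lies in a layer above `N`, hence is a multiple `u Z`.
theorem exists_annihilator_eq_mul (ht : t ≠ 0) (htr : ∀ x, x * t = 0)
    (htmem : ∀ i, t ∈ sgPow T i) {N : ℕ} (hN : N ≠ 0)
    (hsub : ∀ k, N ≤ k → (sgPow T k \ sgPow T (k + 1)).Subsingleton) {u : T}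
    (hu : u ∈ sgPow T N \ sgPow T (N + 1)) (m : ℕ) :
    ∃ q, m ≤ q ∧ ∃ w ∈ sgPow T q \ sgPow T (q + 1), t = u * w := by
  obtain ⟨x, hx, z, hz, hxz⟩ :=
    exists_mul_of_mem_sgPow_add (m := N + 1) (n := m + 1) (by omega) (by omega) (htmem _)
  have hx0 : x ≠ 0 := by rintro rfl; exact ht (by rw [← hxz, zero_mul])
  have hxt : x ≠ t := by rintro rfl; exact ht (by rw [← hxz, htl])
  obtain ⟨k, hk, hxk⟩ := exists_mem_sgPow_sdiff_of_notMem_iInter hx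
    fun hx' => (hres x hx').elim hx0 hxt
  obtain ⟨Z, hZ, rfl⟩ :=
    exists_eq_mul_of_mem_sgPow_sdiff htl hres hsub le_rfl hN (by omega) hu hxk
  have htuw : t = u * (Z * z) := by rw [← hxz, mul_assoc]
  have hw0 : Z * z ≠ 0 := fun h => ht (by rw [htuw, h, mul_zero])
  have hwt : Z * z ≠ t := fun h => ht (by rw [htuw, h, htr])
  have hwm : Z * z ∈ sgPow T m := sgPow_antitone (by omega) (mul_mem_sgPow_add hZ hz)
  obtain ⟨q, hq, hwq⟩ := exists_mem_sgPow_sdiff_of_notMem_iInter hwm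
    fun hw' => (hres _ hw').elim hw0 hwt
  exact ⟨q, hq, Z * z, hwq, htuw⟩

theorem exists_annihilator_notMem_sgPow (ht : t ≠ 0) (htr : ∀ x, x * t = 0)
    (hlayer : ∀ᶠ k in atTop, ((sgPow T k \ sgPow T (k + 1)) \ {t}).ncard = 1) :
    ∃ i, t ∉ sgPow T i := by
  by_contra! htmem
  obtain ⟨N, hN⟩ := eventually_atTop.mp (hlayer.and (eventually_ne_atTop 0))
  have hsingleton : ∀ k, N ≤ k → ∃ d, sgPow T k \ sgPow T (k + 1) = {d} := fun k hk => by
    have hcard := (hN k hk).1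
    rw [Set.sdiff_singleton_eq_self fun htk => htk.2 (htmem (k + 1))] at hcard
    exact Set.ncard_eq_one.mp hcard
  have hsub : ∀ k, N ≤ k → (sgPow T k \ sgPow T (k + 1)).Subsingleton := fun k hk => by
    obtain ⟨d, hd⟩ := hsingleton k hk
    exact hd ▸ Set.subsingleton_singleton
  obtain ⟨u, hu⟩ : (sgPow T N \ sgPow T (N + 1)).Nonempty := by
    obtain ⟨d, hd⟩ := hsingleton N le_rfl
    exact hd ▸ Set.singleton_nonempty d
  have hN0 := (hN N le_rfl).2
  obtain ⟨q, hq, w, hw, htw⟩ := exists_annihilator_eq_mul htl hres ht htr htmem hN0 hsub hu N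
  obtain ⟨q', hq', w', hw', htw'⟩ :=
    exists_annihilator_eq_mul htl hres ht htr htmem hN0 hsub hu (q + 1)
  obtain ⟨Z, -, rfl⟩ :=
    exists_eq_mul_of_mem_sgPow_sdiff htl hres hsub hq (by omega) (by omega) hw hw'
  exact ht (by rw [htw', ← mul_assoc, ← htw, htl])

end Annihilator

theorem MulHom.map_mem_sgPow {M N : Type*} [Mul M] [Mul N] (f : M →ₙ* N) {n : ℕ} {x : M}
    (hx : x ∈ sgPow M n) : f x ∈ sgPow N n := by
  induction n generalizing x with
  | zero => trivial
  | succ n ih =>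
    rcases eq_or_ne n 0 with rfl | hn
    · trivial
    · rw [sgPow_succ hn] at hx
      obtain ⟨a, ha, b, -, rfl⟩ := hx
      rw [map_mul]
      exact mul_mem_sgPow_succ (ih ha) (f b)

/-- `ν` is the Rees quotient map `T → T/⟨t⟩` followed by an isomorphism onto `S`. -/
structure IsAnnihilatorExtension {S T : Type*} [SemigroupWithZero S] [SemigroupWithZero T]
    (t : T) (ν : T →ₙ* S) : Prop where
  ne_zero : t ≠ 0
  annihilator_mul : ∀ x, t * x = 0
  mul_annihilator : ∀ x, x * t = 0
  surjective : Function.Surjective ν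
  map_eq_zero_iff : ∀ x, ν x = 0 ↔ x = 0 ∨ x = t
  injective_off : ∀ x y, x ≠ 0 → x ≠ t → ν x = ν y → x = y

namespace IsAnnihilatorExtension

variable {S T : Type*} [SemigroupWithZero S] [SemigroupWithZero T] {t : T} {ν : T →ₙ* S}
  (h : IsAnnihilatorExtension t ν)
include h

theorem map_ne_zero {x : T} (hx0 : x ≠ 0) (hxt : x ≠ t) : ν x ≠ 0 :=
  fun hx => ((h.map_eq_zero_iff x).mp hx).elim hx0 hxt

theorem eq_of_map_eq {x y : T} (hx : ν x ≠ 0) (hxy : ν x = ν y) : x = y :=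
  h.injective_off x y (fun h0 => hx ((h.map_eq_zero_iff x).mpr (Or.inl h0)))
    (fun ht => hx ((h.map_eq_zero_iff x).mpr (Or.inr ht))) hxy

theorem mem_sgPow_iff {x : T} (hx : ν x ≠ 0) {n : ℕ} : x ∈ sgPow T n ↔ ν x ∈ sgPow S n := by
  refine ⟨ν.map_mem_sgPow, fun hνx => ?_⟩
  induction n generalizing x with
  | zero => trivial
  | succ n ih =>
    rcases eq_or_ne n 0 with rfl | hn
    · trivial
    rw [sgPow_succ hn] at hνx ⊢
    obtain ⟨a, ha, b, -, hab⟩ := hνx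
    beta_reduce at hab
    obtain ⟨y, rfl⟩ := h.surjective a
    obtain ⟨z, rfl⟩ := h.surjective b
    have hy : ν y ≠ 0 := fun hy => hx (by rw [← hab, hy, zero_mul])
    exact ⟨y, ih hy ha, z, trivial, h.eq_of_map_eq (by rwa [map_mul, hab]) (by rw [map_mul, hab])⟩

theorem fgSemigroup (hfg : FGSemigroup S) : FGSemigroup T := by
  classical
  obtain ⟨F, hF⟩ := hfg
  choose σ hσ using h.surjective
  set C := Subsemigroup.closure ((insert t (F.image σ) : Finset T) : Set T)
  have htC : t ∈ C := Subsemigroup.subset_closure (by simp)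
  have hCν : ∀ x, ν x ∈ C.map ν := fun x => by
    rw [MulHom.map_mclosure]
    refine Subsemigroup.closure_mono ?_ (by rw [hF]; trivial)
    intro s hs
    exact ⟨σ s, by simpa using Or.inr ⟨s, hs, rfl⟩, hσ s⟩
  refine ⟨insert t (F.image σ), eq_top_iff.mpr fun x _ => ?_⟩
  obtain ⟨y, hyC, hyx⟩ := Subsemigroup.mem_map.mp (hCν x)
  by_cases hx : ν x = 0
  · rcases (h.map_eq_zero_iff x).mp hx with rfl | rfl
    · rw [← h.annihilator_mul t]
      exact C.mul_mem htC htC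
    · exact htC
  · rwa [h.eq_of_map_eq hx hyx.symm]

theorem mem_iInter_sgPow (hrn : ResiduallyNilpotent S) :
    ∀ x ∈ ⋂ i, sgPow T (i + 1), x = 0 ∨ x = t := fun x hx => by
  have hνx : ν x ∈ ⋂ i, sgPow S (i + 1) :=
    Set.mem_iInter.mpr fun i => ν.map_mem_sgPow (Set.mem_iInter.mp hx i)
  rw [hrn] at hνx
  exact (h.map_eq_zero_iff x).mp hνx

theorem ncard_sdiff_singleton_eq {A : Set T} {B : Set S} (hA : (0 : T) ∉ A) (hB : (0 : S) ∉ B)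
    (hAB : ∀ x, ν x ≠ 0 → (x ∈ A ↔ ν x ∈ B)) : (A \ {t}).ncard = B.ncard := by
  have hν : ∀ x ∈ A \ {t}, ν x ≠ 0 := fun x hx =>
    h.map_ne_zero (fun h0 => hA (h0 ▸ hx.1)) hx.2
  have himage : ν '' (A \ {t}) = B := by
    refine Set.Subset.antisymm (Set.image_subset_iff.mpr fun x hx => (hAB x (hν x hx)).mp hx.1)
      fun s hs => ?_
    obtain ⟨y, rfl⟩ := h.surjective s
    have hy : ν y ≠ 0 := fun h0 => hB (h0 ▸ hs)
    refine ⟨y, ⟨(hAB y hy).mpr hs, fun hyt => hy ?_⟩, rfl⟩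
    exact (h.map_eq_zero_iff y).mpr (Or.inr hyt)
  rw [← himage, Set.InjOn.ncard_image fun x hx y _ hxy => h.eq_of_map_eq (hν x hx) hxy]

theorem eventually_ncard_sgPow_sdiff
    (hS : ∀ᶠ k in atTop, (sgPow S k \ sgPow S (k + 1)).ncard = 1) :
    ∀ᶠ k in atTop, ((sgPow T k \ sgPow T (k + 1)) \ {t}).ncard = 1 :=
  hS.mono fun k hk => .trans (h.ncard_sdiff_singleton_eq (fun h0 => h0.2 (zero_mem_sgPow _))
    (fun h0 => h0.2 (zero_mem_sgPow _)) fun x hx => by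
      simp only [Set.mem_sdiff, h.mem_sgPow_iff hx]) hk

theorem residuallyNilpotent (hrn : ResiduallyNilpotent S) {i : ℕ} (hti : t ∉ sgPow T i) :
    ResiduallyNilpotent T :=
  Set.eq_singleton_iff_unique_mem.mpr ⟨Set.mem_iInter.mpr fun _ => zero_mem_sgPow _,
    fun x hx => (h.mem_iInter_sgPow hrn x hx).resolve_right fun hxt =>
      hti (sgPow_succ_subset i (hxt ▸ Set.mem_iInter.mp hx i))⟩

theorem hasCoclassSg (hfg : FGSemigroup T) {c : ℕ}
    (hS : ∀ᶠ i in atTop, (sgPow S i)ᶜ.ncard = i - 1 + c) {i₀ : ℕ} (hti : t ∉ sgPow T i₀) :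
    HasCoclassSg T (c + 1) := by
  filter_upwards [hS, eventually_ge_atTop i₀] with i hi hii₀
  have htc : t ∈ (sgPow T i)ᶜ := fun ht => hti (sgPow_antitone hii₀ ht)
  have hcard := h.ncard_sdiff_singleton_eq (A := (sgPow T i)ᶜ) (B := (sgPow S i)ᶜ)
    (not_not.mpr (zero_mem_sgPow i)) (not_not.mpr (zero_mem_sgPow i))
    fun x hx => not_congr (h.mem_sgPow_iff hx)
  rw [ccQuot, ← Set.compl_eq_univ_sdiff,
    ← Set.ncard_sdiff_singleton_add_one htc (hfg.finite_compl_sgPow i), hcard, hi]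
  omega

theorem exists_notMem_sgPow (hrn : ResiduallyNilpotent S)
    (hS : ∀ᶠ k in atTop, (sgPow S k \ sgPow S (k + 1)).ncard = 1) : ∃ i, t ∉ sgPow T i :=
  exists_annihilator_notMem_sgPow h.annihilator_mul (h.mem_iInter_sgPow hrn) h.ne_zero
    h.mul_annihilator (h.eventually_ncard_sgPow_sdiff hS)

end IsAnnihilatorExtension

theorem statement4_general (r : ℕ) (hr : 1 ≤ r)
    {S : Type*} [SemigroupWithZero S] [Infinite S]
    (hfgS : FGSemigroup S) (hrnS : ResiduallyNilpotent S) (hccS : HasCoclassSg S (r - 1))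
    {T : Type*} [SemigroupWithZero T]
    (t : T) (ht : t ≠ 0) (htl : ∀ x : T, t * x = 0) (htr : ∀ x : T, x * t = 0)
    (ν : T → S) (hmul : ∀ x y : T, ν (x * y) = ν x * ν y)
    (hsurj : Function.Surjective ν)
    (hker : ∀ x : T, ν x = 0 ↔ x = 0 ∨ x = t)
    (hinj : ∀ x y : T, x ≠ 0 → x ≠ t → ν x = ν y → x = y) :
    FGSemigroup T ∧ ResiduallyNilpotent T ∧ HasCoclassSg T r := by
  have hext : IsAnnihilatorExtension t (⟨ν, hmul⟩ : T →ₙ* S) :=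
    ⟨ht, htl, htr, hsurj, hker, hinj⟩
  have hfgT := hext.fgSemigroup hfgS
  obtain ⟨i₀, hti₀⟩ := hext.exists_notMem_sgPow hrnS (hccS.eventually_ncard_sgPow_sdiff hfgS hrnS)
  have hcc := hext.hasCoclassSg hfgT (hccS.eventually_ncard_compl_sgPow hfgS hrnS) hti₀
  rw [Nat.sub_add_cancel hr] at hcc
  exact ⟨hfgT, hext.residuallyNilpotent hrnS hti₀, hcc⟩

/-- Let `S` be an infinite finitely generated residually nilpotent semigroup of coclass
`r - 1` (`r ≥ 1`), and let `T` be an annihilator extension of `S`: `T` is an infinite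
semigroup with zero containing a non-zero annihilating element `t` such that the Rees
quotient `T/⟨t⟩` is isomorphic to `S` (witnessed by the map `ν`). Then `T` is finitely
generated, residually nilpotent, and has coclass `r`. -/
theorem statement4 (r : ℕ) (hr : 1 ≤ r)
    {S : Type*} [SemigroupWithZero S] [Infinite S]
    (hfgS : FGSemigroup S) (hrnS : ResiduallyNilpotent S) (hccS : HasCoclassSg S (r - 1))
    {T : Type*} [SemigroupWithZero T] [Infinite T]
    (t : T) (ht : t ≠ 0) (htl : ∀ x : T, t * x = 0) (htr : ∀ x : T, x * t = 0)
    (ν : T → S) (hmul : ∀ x y : T, ν (x * y) = ν x * ν y)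
    (hsurj : Function.Surjective ν)
    (hker : ∀ x : T, ν x = 0 ↔ x = 0 ∨ x = t)
    (hinj : ∀ x y : T, x ≠ 0 → x ≠ t → ν x = ν y → x = y) :
    FGSemigroup T ∧ ResiduallyNilpotent T ∧ HasCoclassSg T r :=
  statement4_general r hr hfgS hrnS hccS t ht htl htr ν hmul hsurj hker hinj
end

section
/- For n ≥ 5 and n/2 < k < n-1, let J_k = ⟨u, v | u^{n-1} = u^n, uv = u^k, vu = u^k, v^2 = u^{n-2}⟩ be the nilpotent semigroup of order n with zero u^{n-1}. Then for any field K, K J_{n-1} ≅ K J_k, via the map induced by u ↦ u, v ↦ v - u^{k-1}. -/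
section AlgebraDefs

variable (K : Type*) [Field K] (A : Type*) [NonUnitalRing A] [Module K A]
  [SMulCommClass K A A] [IsScalarTower K A A]

/-- `algPow K A i` is the submodule `Aⁱ` spanned by all products of `i` elements
(with `A⁰ = A¹ = A`). -/
def algPow : ℕ → Submodule K A
  | 0 => ⊤
  | 1 => ⊤
  | n + 2 => Submodule.span K (Set.image2 (· * ·) ((algPow (n + 1) : Submodule K A) : Set A) Set.univ)

/-- The dimension of the layer `Aⁱ/Aⁱ⁺¹`. -/
noncomputable def algLayerDim (i : ℕ) : ℕ :=
  Module.finrank K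
    (↥(algPow K A i) ⧸ (algPow K A (i + 1)).comap (algPow K A i).subtype)

/-- The coclass of the nilpotent quotient `A/Aⁱ`, namely `dim (A/Aⁱ) - (i - 1)`. -/
noncomputable def algCcQuot (i : ℕ) : ℕ :=
  Module.finrank K (A ⧸ algPow K A i) - (i - 1)

/-- A finitely generated residually nilpotent algebra has coclass `r` if the coclasses
of its nilpotent quotients `A/Aⁱ` converge to `r`. -/
def HasCoclassAlg (r : ℕ) : Prop :=
  ∀ᶠ i in Filter.atTop, algCcQuot K A i = r

/-- The two-sided annihilator of an algebra, as a submodule. -/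
def twoSidedAnn : Submodule K A where
  carrier := {a | (∀ b, a * b = 0) ∧ ∀ b, b * a = 0}
  add_mem' := by
    intro a b ha hb
    exact ⟨fun c => by rw [add_mul, ha.1 c, hb.1 c, add_zero],
           fun c => by rw [mul_add, ha.2 c, hb.2 c, add_zero]⟩
  zero_mem' := ⟨fun b => zero_mul b, fun b => mul_zero b⟩
  smul_mem' := by
    intro k a ha
    exact ⟨fun b => by rw [smul_mul_assoc, ha.1 b, smul_zero],
           fun b => by rw [mul_smul_comm, ha.2 b, smul_zero]⟩

/-- The right annihilator of an algebra, as a submodule. -/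
def rightAnn : Submodule K A where
  carrier := {a | ∀ b, b * a = 0}
  add_mem' := by
    intro a b ha hb c
    rw [mul_add, ha c, hb c, add_zero]
  zero_mem' := fun b => mul_zero b
  smul_mem' := by
    intro k a ha b
    rw [mul_smul_comm, ha b, smul_zero]

end AlgebraDefs

/-- `IsContractedAlgebra K f` asserts that `f : S → A` exhibits the algebra `A` as the
contracted semigroup algebra of the semigroup-with-zero `S` over the field `K`:
`f` is multiplicative, sends zero to zero, and the images of the non-zero elements
of `S` form a `K`-basis of `A`. -/
def IsContractedAlgebra (K : Type*) [Field K] {S A : Type*} [SemigroupWithZero S]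
    [NonUnitalRing A] [Module K A] (f : S → A) : Prop :=
  f 0 = 0 ∧ (∀ s t : S, f (s * t) = f s * f t) ∧
  LinearIndependent K (fun s : {s : S // s ≠ 0} => f s.1) ∧
  Submodule.span K (Set.range fun s : {s : S // s ≠ 0} => f s.1) = ⊤
/-- `IsCC1Sg n a b c S u v` asserts that `S` is the nilpotent semigroup of order `n`
with zero given by the presentation
`⟨u, v ∣ u^(n-1) = u^n, u*v = u^a, v*u = u^b, v*v = u^c⟩`:
its distinct elements are `u, u², …, u^(n-2), v` and the zero `u^(n-1)`. -/
def IsCC1Sg (n a b c : ℕ) (S : Type*) [SemigroupWithZero S] (u v : S) : Prop :=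
  mpow u (n - 1) = 0 ∧ u * v = mpow u a ∧ v * u = mpow u b ∧ v * v = mpow u c ∧
  v ≠ 0 ∧ (∀ i, 1 ≤ i → i ≤ n - 2 → mpow u i ≠ 0) ∧
  (∀ i j, 1 ≤ i → i ≤ n - 2 → 1 ≤ j → j ≤ n - 2 → mpow u i = mpow u j → i = j) ∧
  (∀ i, 1 ≤ i → i ≤ n - 2 → v ≠ mpow u i) ∧
  (∀ s : S, s = 0 ∨ s = v ∨ ∃ i, 1 ≤ i ∧ i ≤ n - 2 ∧ s = mpow u i)

/-!
In `K J_k` put `w = v - u^(k-1)`. Since `uv = vu = u^k`, the element `w` is annihilated by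
every power of `u` on both sides, and since `2(k-1) ≥ n-1` the cross terms of `w²` vanish, so
`w² = v² = u^(n-2)`. Hence `u` and `w` multiply exactly like `u` and `v` in `J_(n-1)`, where
`uv = vu = u^(n-1) = 0`. Moreover `u, …, u^(n-2), w` is again a basis of `K J_k`: it is the image
of the semigroup basis `u, …, u^(n-2), v` under a transvection. So the linear map matching the
basis `u, …, u^(n-2), v` of `K J_(n-1)` with it is multiplicative on basis pairs, hence an
algebra isomorphism.
-/

theorem LinearMap.map_mul_of_basis {R ι A B : Type*} [CommSemiring R]
    [NonUnitalNonAssocSemiring A] [Module R A] [SMulCommClass R A A] [IsScalarTower R A A]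
    [NonUnitalNonAssocSemiring B] [Module R B] [SMulCommClass R B B] [IsScalarTower R B B]
    (e : A →ₗ[R] B) (b : Module.Basis ι R A) (h : ∀ i j, e (b i * b j) = e (b i) * e (b j))
    (x y : A) : e (x * y) = e x * e y := by
  have : (LinearMap.mul R A).compr₂ e = (LinearMap.mul R B).compl₁₂ e e :=
    LinearMap.ext_basis b b fun i j => by simpa using h i j
  simpa using LinearMap.congr_fun₂ this x y

section Mpow

variable {S : Type*}

theorem mpow_add_two [Mul S] (x : S) (m : ℕ) : mpow x (m + 2) = mpow x (m + 1) * x := rfl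

theorem mpow_add_one_mul_mpow_add_one [Semigroup S] (x : S) (i j : ℕ) :
    mpow x (i + 1) * mpow x (j + 1) = mpow x (i + j + 2) := by
  induction j with
  | zero => rfl
  | succ j ih =>
    calc mpow x (i + 1) * mpow x (j + 1 + 1) = mpow x (i + 1) * mpow x (j + 1) * x := by
          rw [mul_assoc]; rfl
      _ = mpow x (i + (j + 1) + 2) := by rw [ih]; rfl

theorem mpow_eq_zero_of_le [SemigroupWithZero S] {x : S} {N m : ℕ} (hN : mpow x N = 0)
    (h : N ≤ m) : mpow x m = 0 := by
  induction m, h using Nat.le_induction with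
  | base => exact hN
  | succ m _ ih =>
    rcases m with _ | m
    · exact ih
    · change mpow x (m + 1) * x = 0
      rw [ih, zero_mul]

theorem mpow_add_one_mul_of_mul_eq [Semigroup S] {u v : S} {a : ℕ} (ha : 1 ≤ a)
    (huv : u * v = mpow u a) (i : ℕ) : mpow u (i + 1) * v = mpow u (i + a) := by
  obtain ⟨a, rfl⟩ := Nat.exists_eq_add_of_le' ha
  rcases i with _ | i
  · simp only [Nat.zero_add]
    exact huv
  · calc mpow u (i + 1 + 1) * v = mpow u (i + 1) * (u * v) := by rw [← mul_assoc]; rfl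
      _ = mpow u (i + 1 + (a + 1)) := by
        rw [huv, mpow_add_one_mul_mpow_add_one]; congr 1; omega

theorem mul_mpow_add_one_of_mul_eq [Semigroup S] {u v : S} {b : ℕ} (hb : 1 ≤ b)
    (hvu : v * u = mpow u b) (j : ℕ) : v * mpow u (j + 1) = mpow u (b + j) := by
  obtain ⟨b, rfl⟩ := Nat.exists_eq_add_of_le' hb
  induction j with
  | zero => exact hvu
  | succ j ih =>
    calc v * mpow u (j + 1 + 1) = v * mpow u (j + 1) * u := by rw [mul_assoc]; rfl
      _ = mpow u (b + 1 + (j + 1)) := by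
        rw [ih, show b + 1 + (j + 1) = b + j + 2 by omega, mpow_add_two, Nat.add_right_comm]

end Mpow

namespace IsContractedAlgebra

variable {K : Type*} [Field K] {S A : Type*} [SemigroupWithZero S] [NonUnitalRing A]
  [Module K A] {f : S → A}

theorem apply_zero (hf : IsContractedAlgebra K f) : f 0 = 0 := hf.1

theorem apply_mul (hf : IsContractedAlgebra K f) (s t : S) : f (s * t) = f s * f t := hf.2.1 s t

noncomputable def basis (hf : IsContractedAlgebra K f) : Module.Basis {s : S // s ≠ 0} K A :=
  Module.Basis.mk hf.2.2.1 hf.2.2.2.ge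

theorem basis_apply (hf : IsContractedAlgebra K f) (s : {s : S // s ≠ 0}) :
    hf.basis s = f s :=
  Module.Basis.mk_apply _ _ _

end IsContractedAlgebra

namespace IsCC1Sg

variable {n a b c : ℕ} {S : Type*} [SemigroupWithZero S] {u v : S}

theorem mpow_eq_zero (h : IsCC1Sg n a b c S u v) {m : ℕ} (hm : n - 1 ≤ m) : mpow u m = 0 :=
  mpow_eq_zero_of_le h.1 hm

theorem mpow_add_one_mul (h : IsCC1Sg n a b c S u v) (ha : 1 ≤ a) (i : ℕ) :
    mpow u (i + 1) * v = mpow u (i + a) :=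
  mpow_add_one_mul_of_mul_eq ha h.2.1 i

theorem mul_mpow_add_one (h : IsCC1Sg n a b c S u v) (hb : 1 ≤ b) (j : ℕ) :
    v * mpow u (j + 1) = mpow u (b + j) :=
  mul_mpow_add_one_of_mul_eq hb h.2.2.1 j

theorem mpow_add_one_mul_eq_zero (h : IsCC1Sg n (n - 1) (n - 1) c S u v) (hn : 2 ≤ n) (i : ℕ) :
    mpow u (i + 1) * v = 0 := by
  rw [h.mpow_add_one_mul (by omega), h.mpow_eq_zero (by omega)]

theorem mul_mpow_add_one_eq_zero (h : IsCC1Sg n (n - 1) (n - 1) c S u v) (hn : 2 ≤ n) (j : ℕ) :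
    v * mpow u (j + 1) = 0 := by
  rw [h.mul_mpow_add_one (by omega), h.mpow_eq_zero (by omega)]

def nonzeroElt (h : IsCC1Sg n a b c S u v) : Option (Fin (n - 2)) → {s : S // s ≠ 0}
  | none => ⟨v, h.2.2.2.2.1⟩
  | some j => ⟨mpow u (j + 1), h.2.2.2.2.2.1 _ j.1.succ_pos j.isLt⟩

theorem nonzeroElt_bijective (h : IsCC1Sg n a b c S u v) : Function.Bijective h.nonzeroElt := by
  obtain ⟨-, -, -, -, -, -, hinj, hv, hcover⟩ := h
  constructor
  · rintro (_ | i) (_ | j) hij <;> simp only [nonzeroElt, Subtype.mk.injEq] at hij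
    · rfl
    · exact absurd hij (hv _ j.1.succ_pos j.isLt)
    · exact absurd hij.symm (hv _ i.1.succ_pos i.isLt)
    · have := hinj _ _ i.1.succ_pos i.isLt j.1.succ_pos j.isLt hij
      rw [Fin.ext (Nat.succ_injective this)]
  · rintro ⟨s, hs⟩
    rcases hcover s with rfl | rfl | ⟨i, hi1, hi2, rfl⟩
    · exact absurd rfl hs
    · exact ⟨none, rfl⟩
    · refine ⟨some ⟨i - 1, by omega⟩, Subtype.ext ?_⟩
      simp only [nonzeroElt, Nat.sub_add_cancel hi1]

variable {K : Type*} [Field K] {A : Type*} [NonUnitalRing A] [Module K A] {f : S → A}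

noncomputable def basis (h : IsCC1Sg n a b c S u v) (hf : IsContractedAlgebra K f) :
    Module.Basis (Option (Fin (n - 2))) K A :=
  hf.basis.reindex (Equiv.ofBijective _ h.nonzeroElt_bijective).symm

theorem basis_none (h : IsCC1Sg n a b c S u v) (hf : IsContractedAlgebra K f) :
    h.basis hf none = f v := by
  simp [basis, hf.basis_apply, nonzeroElt]

theorem basis_some (h : IsCC1Sg n a b c S u v) (hf : IsContractedAlgebra K f) (j : Fin (n - 2)) :
    h.basis hf (some j) = f (mpow u (j + 1)) := by
  simp [basis, hf.basis_apply, nonzeroElt]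

theorem basis_coord_none_mpow (h : IsCC1Sg n a b c S u v) (hf : IsContractedAlgebra K f)
    (m : ℕ) : (h.basis hf).coord none (f (mpow u (m + 1))) = 0 := by
  rcases lt_or_ge m (n - 2) with hm | hm
  · rw [← h.basis_some hf ⟨m, hm⟩, Module.Basis.coord_apply, Module.Basis.repr_self,
      Finsupp.single_apply, if_neg (Option.some_ne_none _)]
  · rw [h.mpow_eq_zero (by omega), hf.apply_zero, map_zero]

variable {m : ℕ}

theorem mpow_add_one_mul_twist (h : IsCC1Sg n (m + 2) (m + 2) c S u v)
    (hf : IsContractedAlgebra K f) (i : ℕ) :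
    f (mpow u (i + 1)) * (f v - f (mpow u (m + 1))) = 0 := by
  rw [mul_sub, ← hf.apply_mul, ← hf.apply_mul, h.mpow_add_one_mul (by omega),
    mpow_add_one_mul_mpow_add_one, sub_eq_zero]
  exact congrArg (f ∘ mpow u) (by omega)

theorem twist_mul_mpow_add_one (h : IsCC1Sg n (m + 2) (m + 2) c S u v)
    (hf : IsContractedAlgebra K f) (j : ℕ) :
    (f v - f (mpow u (m + 1))) * f (mpow u (j + 1)) = 0 := by
  rw [sub_mul, ← hf.apply_mul, ← hf.apply_mul, h.mul_mpow_add_one (by omega),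
    mpow_add_one_mul_mpow_add_one, sub_eq_zero]
  exact congrArg (f ∘ mpow u) (by omega)

theorem twist_mul_twist (h : IsCC1Sg n (m + 2) (m + 2) c S u v)
    (hf : IsContractedAlgebra K f) (hmn : n ≤ 2 * m + 3) :
    (f v - f (mpow u (m + 1))) * (f v - f (mpow u (m + 1))) = f (mpow u c) := by
  have hzero : ∀ i, n - 1 ≤ i → f (mpow u i) = 0 := fun i hi => by
    rw [h.mpow_eq_zero hi, hf.apply_zero]
  simp only [sub_mul, mul_sub, ← hf.apply_mul, h.2.2.2.1, h.mpow_add_one_mul (by omega),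
    h.mul_mpow_add_one (by omega), mpow_add_one_mul_mpow_add_one]
  rw [hzero (m + (m + 2)) (by omega), hzero (m + 2 + m) (by omega),
    hzero (m + m + 2) (by omega)]
  abel

end IsCC1Sg

section Twist

variable {K : Type*} [Field K] {n a b c a' b' c' : ℕ}
  {S : Type*} [SemigroupWithZero S] {u v : S} {T : Type*} [SemigroupWithZero T] {x y : T}
  {A : Type*} [NonUnitalRing A] [Module K A] {B : Type*} [NonUnitalRing B] [Module K B]
  {f : S → A} {g : T → B}

noncomputable def twistEquiv (hS : IsCC1Sg n a b c S u v) (hT : IsCC1Sg n a' b' c' T x y)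
    (hf : IsContractedAlgebra K f) (hg : IsContractedAlgebra K g) (m : ℕ) : A ≃ₗ[K] B :=
  ((hS.basis hf).equiv (hT.basis hg) (Equiv.refl _)).trans
    (LinearEquiv.transvection (f := -(hT.basis hg).coord none) (v := g (mpow x (m + 1)))
      (by simp [hT.basis_coord_none_mpow hg]))

variable (hS : IsCC1Sg n a b c S u v) (hT : IsCC1Sg n a' b' c' T x y)
  (hf : IsContractedAlgebra K f) (hg : IsContractedAlgebra K g) (m : ℕ)

theorem twistEquiv_apply_basis (i : Option (Fin (n - 2))) :
    twistEquiv hS hT hf hg m (hS.basis hf i) =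
      hT.basis hg i - (hT.basis hg).coord none (hT.basis hg i) • g (mpow x (m + 1)) := by
  simp only [twistEquiv, LinearEquiv.trans_apply, Module.Basis.equiv_apply, Equiv.refl_apply,
    LinearEquiv.transvection.coe_apply, LinearMap.transvection.apply, LinearMap.neg_apply,
    neg_smul, sub_eq_add_neg]

theorem twistEquiv_apply_generator : twistEquiv hS hT hf hg m (f v) = g y - g (mpow x (m + 1)) := by
  have := twistEquiv_apply_basis hS hT hf hg m none
  rwa [Module.Basis.coord_apply, Module.Basis.repr_self, Finsupp.single_eq_same, one_smul,
    hS.basis_none, hT.basis_none] at this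

theorem twistEquiv_apply_mpow (i : ℕ) :
    twistEquiv hS hT hf hg m (f (mpow u i)) = g (mpow x i) := by
  suffices key : ∀ j, twistEquiv hS hT hf hg m (f (mpow u (j + 1))) = g (mpow x (j + 1)) by
    rcases i with _ | j
    · exact key 0 -- `mpow u 0 = u = mpow u 1`
    · exact key j
  intro j
  rcases lt_or_ge j (n - 2) with hj | hj
  · have := twistEquiv_apply_basis hS hT hf hg m (some ⟨j, hj⟩)
    rwa [hS.basis_some, hT.basis_some, hT.basis_coord_none_mpow, zero_smul, sub_zero] at this
  · rw [hS.mpow_eq_zero (by omega), hT.mpow_eq_zero (by omega), hf.apply_zero, hg.apply_zero,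
      map_zero]

end Twist

section TwistHom

variable {K : Type*} [Field K] {n c m : ℕ}
  {S : Type*} [SemigroupWithZero S] {u v : S} {T : Type*} [SemigroupWithZero T] {x y : T}
  {A : Type*} [NonUnitalRing A] [Module K A] [SMulCommClass K A A] [IsScalarTower K A A]
  {B : Type*} [NonUnitalRing B] [Module K B] [SMulCommClass K B B] [IsScalarTower K B B]
  {f : S → A} {g : T → B}

theorem twistEquiv_map_mul (hS : IsCC1Sg n (n - 1) (n - 1) c S u v)
    (hT : IsCC1Sg n (m + 2) (m + 2) c T x y) (hf : IsContractedAlgebra K f)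
    (hg : IsContractedAlgebra K g) (hn : 2 ≤ n) (hmn : n ≤ 2 * m + 3) (z w : A) :
    twistEquiv hS hT hf hg m (z * w) =
      twistEquiv hS hT hf hg m z * twistEquiv hS hT hf hg m w := by
  refine (twistEquiv hS hT hf hg m).toLinearMap.map_mul_of_basis (hS.basis hf) ?_ z w
  rintro (_ | i) (_ | j) <;>
    simp only [LinearEquiv.coe_coe, hS.basis_none, hS.basis_some, ← hf.apply_mul,
      twistEquiv_apply_generator, twistEquiv_apply_mpow]
  · rw [hS.2.2.2.1, twistEquiv_apply_mpow, hT.twist_mul_twist hg hmn]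
  · rw [hS.mul_mpow_add_one_eq_zero hn, hf.apply_zero, map_zero, hT.twist_mul_mpow_add_one hg]
  · rw [hS.mpow_add_one_mul_eq_zero hn, hf.apply_zero, map_zero, hT.mpow_add_one_mul_twist hg]
  · rw [mpow_add_one_mul_mpow_add_one, twistEquiv_apply_mpow, ← hg.apply_mul,
      mpow_add_one_mul_mpow_add_one]

noncomputable def twistAlgHom (hS : IsCC1Sg n (n - 1) (n - 1) c S u v)
    (hT : IsCC1Sg n (m + 2) (m + 2) c T x y) (hf : IsContractedAlgebra K f)
    (hg : IsContractedAlgebra K g) (hn : 2 ≤ n) (hmn : n ≤ 2 * m + 3) : A →ₙₐ[K] B :=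
  { (twistEquiv hS hT hf hg m : A →ₗ[K] B) with
    map_zero' := (twistEquiv hS hT hf hg m).map_zero
    map_mul' := twistEquiv_map_mul hS hT hf hg hn hmn }

end TwistHom

theorem statement9_general {K : Type*} [Field K] (n k : ℕ) (hk1 : n < 2 * k)
    (hk2 : k < n - 1)
    {S' : Type*} [SemigroupWithZero S'] (u' v' : S')
    (h' : IsCC1Sg n (n - 1) (n - 1) (n - 2) S' u' v')
    {Sₖ : Type*} [SemigroupWithZero Sₖ] (uₖ vₖ : Sₖ)
    (hₖ : IsCC1Sg n k k (n - 2) Sₖ uₖ vₖ)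
    {A : Type*} [NonUnitalRing A] [Module K A] [SMulCommClass K A A] [IsScalarTower K A A]
    {B : Type*} [NonUnitalRing B] [Module K B] [SMulCommClass K B B] [IsScalarTower K B B]
    (f : S' → A) (hf : IsContractedAlgebra K f)
    (g : Sₖ → B) (hg : IsContractedAlgebra K g) :
    ∃ e : A →ₙₐ[K] B, Function.Bijective e ∧
      e (f u') = g uₖ ∧ e (f v') = g vₖ - g (mpow uₖ (k - 1)) := by
  obtain ⟨m, rfl⟩ : ∃ m, k = m + 2 := ⟨k - 2, by omega⟩
  exact ⟨twistAlgHom h' hₖ hf hg (by omega) (by omega), (twistEquiv h' hₖ hf hg m).bijective,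
    twistEquiv_apply_mpow h' hₖ hf hg m 1, twistEquiv_apply_generator h' hₖ hf hg m⟩

/-- For `n ≥ 5` and `n/2 < k < n - 1`, the contracted semigroup algebras `K J_(n-1)` and
`K J_k` of the coclass-one semigroups
`J_k = ⟨u, v ∣ u^(n-1) = uⁿ, u*v = uᵏ, v*u = uᵏ, v² = u^(n-2)⟩` of order `n`
are isomorphic, via the map induced by `u ↦ u`, `v ↦ v - u^(k-1)`. -/
theorem statement9 {K : Type*} [Field K] (n k : ℕ) (hn : 5 ≤ n) (hk1 : n < 2 * k)
    (hk2 : k < n - 1)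
    {S' : Type*} [SemigroupWithZero S'] (u' v' : S')
    (h' : IsCC1Sg n (n - 1) (n - 1) (n - 2) S' u' v')
    {Sₖ : Type*} [SemigroupWithZero Sₖ] (uₖ vₖ : Sₖ)
    (hₖ : IsCC1Sg n k k (n - 2) Sₖ uₖ vₖ)
    {A : Type*} [NonUnitalRing A] [Module K A] [SMulCommClass K A A] [IsScalarTower K A A]
    {B : Type*} [NonUnitalRing B] [Module K B] [SMulCommClass K B B] [IsScalarTower K B B]
    (f : S' → A) (hf : IsContractedAlgebra K f)
    (g : Sₖ → B) (hg : IsContractedAlgebra K g) :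
    ∃ e : A →ₙₐ[K] B, Function.Bijective e ∧
      e (f u') = g uₖ ∧ e (f v') = g vₖ - g (mpow uₖ (k - 1)) :=
  statement9_general n k hk1 hk2 u' v' h' uₖ vₖ hₖ f hf g hg
end
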